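/- There exists an absolute constant C such that the following holds. Let A be an n × n random matrix with i.i.d. entries satisfying E A_{ij}² ≤ 1 and such that almost surely each entry A_{ij} is either 0 or satisfies √n/2 ≤ |A_{ij}| ≤ 5√n/√ε, and let ε ∈ (0,1/2]. Then with probability at least 1 − 2·exp(−εn/4) there exist sets I, J ⊆ {1,...,n} with |I| ≤ εn and |J| ≤ εn such that the matrix Ã obtained from A by setting every entry with index in I × J to zero satisfies ‖Ã‖ ≤ C·(ln ε^{−1}/√ε)·√n. -/

import Mathlib

/-!
Call a row (column) heavy if it has more than `k ≈ log ε⁻¹` nonzero entries, and let `S_r` (`S_c`)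
be the number of nonzero entries in heavy rows (columns). Deleting the heavy rows together with
every row that meets a heavy column, and symmetrically for columns, removes at most `S_r + S_c`
rows and as many columns, and leaves at most `k` nonzero entries, each of size at most `5√n/√ε`,
in every row and column; by the Schur test the remaining matrix has norm at most `k · 5√n/√ε`.
Each entry is nonzero with probability at most `4/n`, since `E A² ≤ 1` and a nonzero entry has
`A² ≥ n/4`. As `exp (d · 1[d > k]) ≤ 1 + exp (2d - (k + 1))` and the rows are independent,
`E exp S_r ≤ exp (εn/4)`, so Markov's inequality gives `P (S_r ≥ εn/2) ≤ exp (-εn/4)`; likewise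
for `S_c`.
-/

open MeasureTheory ProbabilityTheory
open scoped ENNReal NNReal

/-- The `ℓ₂ → ℓ₂` operator norm of a real matrix. -/
noncomputable def l2OpNorm {m k : Type*} [Fintype m] [Fintype k] [DecidableEq k]
    (A : Matrix m k ℝ) : ℝ :=
  ‖LinearMap.toContinuousLinearMap (Matrix.toEuclideanLin (𝕜 := ℝ) A)‖

/-- The matrix obtained from `A` by zeroing out all entries in the `I × J` submatrix. -/
noncomputable def zeroSub {n : ℕ} (A : Matrix (Fin n) (Fin n) ℝ) (I J : Finset (Fin n)) :
    Matrix (Fin n) (Fin n) ℝ :=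
  Matrix.of fun i j => if i ∈ I ∧ j ∈ J then 0 else A i j

open Finset Matrix Real

namespace ProbabilityTheory

lemma iIndepFun.curry {Ω ι κ 𝓧 : Type*} {mΩ : MeasurableSpace Ω} {μ : Measure Ω}
    [MeasurableSpace 𝓧] {X : ι → κ → Ω → 𝓧} (mX : ∀ i j, Measurable (X i j))
    (h : iIndepFun (fun p : ι × κ => X p.1 p.2) μ) :
    iIndepFun (fun i ω => (X i · ω)) μ := by
  have := h.isProbabilityMeasure
  have hsigma : iIndepFun (fun p : (_ : ι) × κ => X p.1 p.2) μ :=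
    h.precomp (Equiv.sigmaEquivProd ι κ).injective
  have hrow : ∀ i, μ.map (fun ω => (X i · ω)) = Measure.infinitePi fun j => μ.map (X i j) :=
    fun i => (h.precomp (Prod.mk_right_injective i)).map_fun_eq_infinitePi_map (mX i)
  rw [iIndepFun_iff_map_fun_eq_infinitePi_map fun i => measurable_pi_lambda _ (mX i)]
  calc μ.map (fun ω i => (X i · ω))
      = (μ.map fun ω (p : (_ : ι) × κ) => X p.1 p.2 ω).map
          (MeasurableEquiv.piCurry fun _ _ => 𝓧) := by
        rw [Measure.map_map (MeasurableEquiv.measurable _) (by fun_prop)]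
        rfl
    _ = Measure.infinitePi fun i => Measure.infinitePi fun j => μ.map (X i j) := by
        rw [hsigma.map_fun_eq_infinitePi_map (X := fun p : (_ : ι) × κ => X p.1 p.2)
          fun p => mX p.1 p.2]
        have := fun i j => Measure.isProbabilityMeasure_map (μ := μ) (mX i j).aemeasurable
        exact Measure.infinitePi_map_piCurry fun i j => μ.map (X i j)
    _ = _ := by simp_rw [hrow]

end ProbabilityTheory

section Probability

variable {Ω : Type*} [MeasurableSpace Ω] {μ : Measure Ω}

lemma ofReal_one_sub_add_le_measure [IsProbabilityMeasure μ] {E F S : Set Ω} {a b : ℝ}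
    (hE : μ.real E ≤ a) (hF : μ.real F ≤ b) (hS : ∀ᵐ ω ∂μ, ω ∉ E → ω ∉ F → ω ∈ S) :
    ENNReal.ofReal (1 - (a + b)) ≤ μ S := by
  have hsub : ((E ∪ F)ᶜ : Set Ω) ≤ᵐ[μ] S :=
    hS.mono fun ω h hω => h (fun hE => hω (Or.inl hE)) fun hF => hω (Or.inr hF)
  have hcompl := measureReal_union_le (μ := μ) (E ∪ F) (E ∪ F)ᶜ
  rw [Set.union_compl_self, probReal_univ] at hcompl
  have hS' : μ.real (E ∪ F)ᶜ ≤ μ.real S :=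
    ENNReal.toReal_mono (measure_ne_top μ S) (measure_mono_ae hsub)
  rw [ENNReal.ofReal_le_iff_le_toReal (measure_ne_top μ S), ← measureReal_def]
  linarith [measureReal_union_le (μ := μ) E F]

lemma measureReal_ne_zero_le [IsFiniteMeasure μ] {X : Ω → ℝ} {a : ℝ} (ha : 0 < a)
    (hX : MemLp X 2 μ) (hgap : ∀ᵐ ω ∂μ, X ω = 0 ∨ a ≤ |X ω|) :
    μ.real {ω | X ω ≠ 0} ≤ (∫ ω, X ω ^ 2 ∂μ) / a ^ 2 := by
  have hsub : {ω | X ω ≠ 0} ≤ᵐ[μ] {ω | a ^ 2 ≤ X ω ^ 2} :=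
    hgap.mono fun ω h (hne : X ω ≠ 0) => show a ^ 2 ≤ X ω ^ 2 by
      simpa only [sq_abs] using pow_le_pow_left₀ ha.le (h.resolve_left hne) 2
  rw [le_div_iff₀' (by positivity)]
  calc a ^ 2 * μ.real {ω | X ω ≠ 0} ≤ a ^ 2 * μ.real {ω | a ^ 2 ≤ X ω ^ 2} :=
        mul_le_mul_of_nonneg_left
          (ENNReal.toReal_mono (measure_ne_top _ _) (measure_mono_ae hsub)) (sq_nonneg a)
    _ ≤ ∫ ω, X ω ^ 2 ∂μ :=
        mul_meas_ge_le_integral_of_nonneg (ae_of_all _ fun ω => sq_nonneg _) hX.integrable_sq _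

lemma mgf_ite_eq_zero [IsProbabilityMeasure μ] {X : Ω → ℝ} (hX : Measurable X) (t : ℝ) :
    mgf (fun ω => if X ω = 0 then 0 else 1) μ t = 1 + (rexp t - 1) * μ.real {ω | X ω ≠ 0} := by
  have hset : MeasurableSet {ω | X ω ≠ 0} := (measurableSet_singleton 0).compl.preimage hX
  have hpt : (fun ω => rexp (t * if X ω = 0 then 0 else 1))
      = fun ω => 1 + (rexp t - 1) * {ω | X ω ≠ 0}.indicator 1 ω := by
    funext ω
    by_cases h : X ω = 0 <;> simp [h]
  rw [mgf, hpt, integral_add (integrable_const 1), integral_const_mul,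
    integral_indicator_one hset]
  · simp
  · exact ((integrable_const 1).indicator hset).const_mul _

end Probability

section NonzeroCount

variable {κ : Type*} [Fintype κ]

noncomputable def nnz (v : κ → ℝ) : ℕ := #{j | v j ≠ 0}

lemma nnz_le_card (v : κ → ℝ) : nnz v ≤ Fintype.card κ :=
  card_le_univ _

lemma nnz_eq_sum (v : κ → ℝ) :
    (nnz v : ℝ) = ∑ j, if v j = 0 then 0 else 1 := by
  simp [nnz, natCast_card_filter, ite_not]

lemma measurable_nnz : Measurable fun v : κ → ℝ => (nnz v : ℝ) := by
  simp_rw [nnz_eq_sum]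
  exact Finset.measurable_sum _ fun j _ =>
    Measurable.ite (measurableSet_eq_fun (measurable_pi_apply j) measurable_const)
      measurable_const measurable_const

lemma sum_abs_le_of_nnz_le {v : κ → ℝ} {k : ℕ} {M : ℝ} (hM : 0 ≤ M)
    (hv : ∀ j, |v j| ≤ M) (hk : nnz v ≤ k) : ∑ j, |v j| ≤ k * M := calc
  ∑ j, |v j| = ∑ j ∈ {j | v j ≠ 0}, |v j| :=
      (sum_filter_of_ne fun j _ h => by simpa using h).symm
  _ ≤ ∑ j ∈ {j | v j ≠ 0}, M := sum_le_sum fun j _ => hv j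
  _ = nnz v * M := by simp [nnz]
  _ ≤ k * M := by gcongr

noncomputable def heavyPart (k : ℕ) (v : κ → ℝ) : ℝ := if k < nnz v then nnz v else 0

lemma measurable_heavyPart (k : ℕ) : Measurable (heavyPart (κ := κ) k) := by
  have hlt : MeasurableSet {v : κ → ℝ | k < nnz v} := by
    simpa only [← Nat.cast_lt (α := ℝ)] using measurableSet_lt measurable_const measurable_nnz
  exact Measurable.ite hlt measurable_nnz measurable_const

lemma heavyPart_le_card (k : ℕ) (v : κ → ℝ) : heavyPart k v ≤ Fintype.card κ := by
  unfold heavyPart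
  split_ifs
  · exact_mod_cast nnz_le_card v
  · positivity

lemma exp_heavyPart_le (k : ℕ) (v : κ → ℝ) :
    rexp (heavyPart k v) ≤ 1 + rexp (-(k + 1)) * rexp (2 * nnz v) := by
  rw [heavyPart, ← Real.exp_add]
  split_ifs with h
  · have : (k : ℝ) + 1 ≤ nnz v := by exact_mod_cast h
    linarith [Real.exp_le_exp.2 (show (nnz v : ℝ) ≤ -(k + 1) + 2 * nnz v by linarith)]
  · linarith [Real.exp_pos (-(k + 1) + 2 * nnz v), Real.exp_zero]

end NonzeroCount

lemma l2OpNorm_le_sqrt_mul {m κ : Type*} [Fintype m] [Fintype κ] [DecidableEq κ]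
    (B : Matrix m κ ℝ) {R C : ℝ} (hR : 0 ≤ R) (hrow : ∀ i, ∑ j, |B i j| ≤ R)
    (hcol : ∀ j, ∑ i, |B i j| ≤ C) : l2OpNorm B ≤ √(R * C) := by
  refine ContinuousLinearMap.opNorm_le_bound _ (Real.sqrt_nonneg _) fun x => ?_
  set y := WithLp.ofLp x
  -- Cauchy–Schwarz with weights `|B i j|` in each row
  have hrow_sq : ∀ i, (B *ᵥ y) i ^ 2 ≤ R * ∑ j, |B i j| * y j ^ 2 := fun i => calc
    (B *ᵥ y) i ^ 2 ≤ (∑ j, |B i j|) * ∑ j, |B i j| * y j ^ 2 :=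
        sum_sq_le_sum_mul_sum_of_sq_le_mul _ (fun j _ => abs_nonneg _)
          (fun j _ => by positivity) fun j _ => le_of_eq <| by rw [mul_pow, ← sq_abs (B i j)]; ring
    _ ≤ R * ∑ j, |B i j| * y j ^ 2 := by gcongr; exact hrow i
  have hsq : ‖Matrix.toEuclideanLin B x‖ ^ 2 ≤ R * C * ‖x‖ ^ 2 := calc
    ‖Matrix.toEuclideanLin B x‖ ^ 2 = ∑ i, (B *ᵥ y) i ^ 2 := by
        simp [EuclideanSpace.norm_sq_eq, y]
    _ ≤ ∑ i, R * ∑ j, |B i j| * y j ^ 2 := sum_le_sum fun i _ => hrow_sq i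
    _ = R * ∑ j, (∑ i, |B i j|) * y j ^ 2 := by
        rw [← mul_sum, sum_comm]; simp_rw [sum_mul]
    _ ≤ R * ∑ j, C * y j ^ 2 := by gcongr with j; exact hcol j
    _ = R * C * ‖x‖ ^ 2 := by simp [EuclideanSpace.norm_sq_eq, mul_sum, mul_assoc, y]
  calc ‖(LinearMap.toContinuousLinearMap (Matrix.toEuclideanLin B)) x‖
      = √(‖Matrix.toEuclideanLin B x‖ ^ 2) := (Real.sqrt_sq (norm_nonneg _)).symm
    _ ≤ √(R * C * ‖x‖ ^ 2) := Real.sqrt_le_sqrt hsq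
    _ = √(R * C) * ‖x‖ := by rw [Real.sqrt_mul' _ (by positivity), Real.sqrt_sq (norm_nonneg _)]

lemma l2OpNorm_le_of_nnz_le {m κ : Type*} [Fintype m] [Fintype κ] [DecidableEq κ]
    (B : Matrix m κ ℝ) {k : ℕ} {M : ℝ} (hM : 0 ≤ M) (hB : ∀ i j, |B i j| ≤ M)
    (hrow : ∀ i, nnz (B i) ≤ k) (hcol : ∀ j, nnz (Bᵀ j) ≤ k) : l2OpNorm B ≤ k * M := calc
  l2OpNorm B ≤ √((k * M) * (k * M)) :=
      l2OpNorm_le_sqrt_mul B (by positivity) (fun i => sum_abs_le_of_nnz_le hM (hB i) (hrow i))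
        fun j => sum_abs_le_of_nnz_le (v := Bᵀ j) hM (fun i => hB i j) (hcol j)
  _ = k * M := Real.sqrt_mul_self (by positivity)

section HeavyRows

variable {m κ : Type*} [Fintype m] [Fintype κ]

noncomputable def heavyRows (k : ℕ) (B : Matrix m κ ℝ) : Finset m := {i | k < nnz (B i)}

noncomputable def heavyMass (k : ℕ) (B : Matrix m κ ℝ) : ℕ := ∑ i ∈ heavyRows k B, nnz (B i)

noncomputable def heavyCover [DecidableEq m] (k : ℕ) (B : Matrix m κ ℝ) : Finset m :=
  heavyRows k B ∪ (heavyRows k Bᵀ).biUnion fun j => {i | B i j ≠ 0}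

lemma card_heavyRows_le (k : ℕ) (B : Matrix m κ ℝ) : #(heavyRows k B) ≤ heavyMass k B := by
  simpa [heavyMass] using card_nsmul_le_sum (heavyRows k B) (fun i => nnz (B i)) 1 fun i hi => by
    simp only [heavyRows, mem_filter] at hi; omega

lemma card_heavyCover_le [DecidableEq m] (k : ℕ) (B : Matrix m κ ℝ) :
    #(heavyCover k B) ≤ heavyMass k B + heavyMass k Bᵀ := calc
  #(heavyCover k B)
      ≤ #(heavyRows k B) + #((heavyRows k Bᵀ).biUnion fun j => {i | B i j ≠ 0}) :=
      card_union_le _ _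
  _ ≤ heavyMass k B + heavyMass k Bᵀ := add_le_add (card_heavyRows_le k B) card_biUnion_le

lemma heavyMass_le_card_mul (k : ℕ) (B : Matrix m κ ℝ) :
    heavyMass k B ≤ Fintype.card m * Fintype.card κ := calc
  heavyMass k B ≤ ∑ _i ∈ heavyRows k B, Fintype.card κ := sum_le_sum fun i _ => nnz_le_card _
  _ ≤ ∑ _i : m, Fintype.card κ := sum_le_sum_of_subset (subset_univ _)
  _ = Fintype.card m * Fintype.card κ := by simp

lemma heavyMass_eq_sum (k : ℕ) (B : Matrix m κ ℝ) :
    (heavyMass k B : ℝ) = ∑ i, heavyPart k (B i) := by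
  simp [heavyMass, heavyRows, heavyPart, sum_filter]

end HeavyRows

lemma zeroSub_transpose {n : ℕ} (B : Matrix (Fin n) (Fin n) ℝ) (I J : Finset (Fin n)) :
    (zeroSub B I J)ᵀ = zeroSub Bᵀ J I := by
  ext i j
  simp [zeroSub, and_comm]

lemma nnz_zeroSub_heavyCover_le {n : ℕ} (k : ℕ) (B : Matrix (Fin n) (Fin n) ℝ) (i : Fin n) :
    nnz (zeroSub B (heavyCover k B) (heavyCover k Bᵀ) i) ≤ k := by
  by_cases hi : i ∈ heavyRows k B
  · -- a heavy row is erased entirely: its nonzero entries lie in columns meeting a heavy row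
    have hzero : ∀ j, zeroSub B (heavyCover k B) (heavyCover k Bᵀ) i j = 0 := by
      intro j
      by_cases hB : B i j = 0
      · simp [zeroSub, hB]
      · have hj : j ∈ heavyCover k Bᵀ := mem_union_right _
          (mem_biUnion.2 ⟨i, by simpa using hi, mem_filter.2 ⟨mem_univ _, hB⟩⟩)
        have hi' : i ∈ heavyCover k B := mem_union_left _ hi
        simp [zeroSub, hi', hj]
    simp [nnz, hzero]
  · refine le_trans (card_le_card fun j => ?_) (by simpa [heavyRows, nnz] using hi)
    simp only [mem_filter, mem_univ, true_and]
    contrapose!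
    intro hB
    simp [zeroSub, hB]

lemma exists_zeroSub_l2OpNorm_le {n : ℕ} (k : ℕ) (B : Matrix (Fin n) (Fin n) ℝ) {M : ℝ}
    (hM : 0 ≤ M) (hB : ∀ i j, |B i j| ≤ M) :
    ∃ I J : Finset (Fin n), #I ≤ heavyMass k B + heavyMass k Bᵀ ∧
      #J ≤ heavyMass k B + heavyMass k Bᵀ ∧ l2OpNorm (zeroSub B I J) ≤ k * M := by
  refine ⟨heavyCover k B, heavyCover k Bᵀ, card_heavyCover_le k B, ?_, ?_⟩
  · simpa [add_comm] using card_heavyCover_le k Bᵀ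
  refine l2OpNorm_le_of_nnz_le _ hM (fun i j => ?_) (nnz_zeroSub_heavyCover_le k B) fun j => ?_
  · by_cases h : i ∈ heavyCover k B ∧ j ∈ heavyCover k Bᵀ
      <;> simp [zeroSub, h, hM, hB i j]
  · simpa [zeroSub_transpose] using nnz_zeroSub_heavyCover_le k Bᵀ j

/-- `4 (e² - 1)` is the exponent `(e² - 1) q n` of `measureReal_le_heavyMass_le` at `q = 4 / n`. -/
lemma exists_threshold {ε : ℝ} (hε : 0 < ε) (hε2 : ε ≤ 1 / 2) :
    ∃ k : ℕ, rexp (4 * (rexp 2 - 1) - (k + 1)) ≤ ε / 4 ∧ 5 * (k : ℝ) ≤ 300 * log ε⁻¹ := by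
  have hlog2 : log 2 ≤ log ε⁻¹ :=
    log_le_log two_pos (by rw [le_inv_comm₀ two_pos hε]; linarith)
  have hlog2_lo := Real.log_two_gt_d9
  have hlog2_hi := Real.log_two_lt_d9
  have hceil := Nat.ceil_lt_add_one (show 0 ≤ log ε⁻¹ by linarith)
  have he2 : rexp 2 < 7.4 := by
    have := Real.exp_one_lt_d9
    rw [show (2 : ℝ) = 1 + 1 by norm_num, Real.exp_add]
    nlinarith [Real.exp_pos 1]
  refine ⟨27 + ⌈log ε⁻¹⌉₊, ?_, ?_⟩
  · have hε4 : log (ε / 4) = -log ε⁻¹ - 2 * log 2 := by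
      rw [log_div hε.ne' (by norm_num), log_inv, show (4 : ℝ) = 2 ^ 2 by norm_num, log_pow]
      push_cast
      ring
    calc rexp (4 * (rexp 2 - 1) - ((27 + ⌈log ε⁻¹⌉₊ : ℕ) + 1)) ≤ rexp (log (ε / 4)) := by
          gcongr
          push_cast
          linarith [Nat.le_ceil (log ε⁻¹)]
      _ = ε / 4 := exp_log (by positivity)
  · push_cast
    linarith

section HeavyMassTail

variable {Ω : Type*} [MeasurableSpace Ω] {μ : Measure Ω}

lemma mgf_nnz_le {κ : Type*} [Fintype κ] {V : Ω → κ → ℝ} (hV : ∀ j, Measurable fun ω => V ω j)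
    (hind : iIndepFun (fun j ω => V ω j) μ) {q : ℝ} (hq : ∀ j, μ.real {ω | V ω j ≠ 0} ≤ q)
    {t : ℝ} (ht : 0 ≤ t) :
    mgf (fun ω => (nnz (V ω) : ℝ)) μ t ≤ rexp ((rexp t - 1) * q * Fintype.card κ) := by
  have := hind.isProbabilityMeasure
  have hsum : (fun ω => (nnz (V ω) : ℝ)) = ∑ j, fun ω => if V ω j = 0 then 0 else 1 := by
    funext ω
    simp [nnz_eq_sum]
  have hξ : ∀ j, Measurable fun ω => if V ω j = 0 then (0 : ℝ) else 1 := fun j =>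
    Measurable.ite (measurableSet_eq_fun (hV j) measurable_const) measurable_const
      measurable_const
  have hξind : iIndepFun (fun j ω => if V ω j = 0 then (0 : ℝ) else 1) μ :=
    hind.comp (fun _ x => if x = 0 then (0 : ℝ) else 1) fun _ =>
      Measurable.ite (measurableSet_singleton 0) measurable_const measurable_const
  rw [hsum, hξind.mgf_sum hξ]
  calc ∏ j, mgf (fun ω => if V ω j = 0 then 0 else 1) μ t
      ≤ ∏ _j : κ, rexp ((rexp t - 1) * q) := by
        refine prod_le_prod (fun j _ => mgf_nonneg) fun j _ => ?_
        rw [mgf_ite_eq_zero (hV j)]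
        have : 0 ≤ rexp t - 1 := by linarith [Real.one_le_exp ht]
        linarith [Real.add_one_le_exp ((rexp t - 1) * q), mul_le_mul_of_nonneg_left (hq j) this]
    _ = rexp ((rexp t - 1) * q * Fintype.card κ) := by
        rw [prod_const, card_univ, ← Real.exp_nat_mul]
        ring_nf

lemma mgf_heavyPart_le {κ : Type*} [Fintype κ] {V : Ω → κ → ℝ}
    (hV : ∀ j, Measurable fun ω => V ω j) (hind : iIndepFun (fun j ω => V ω j) μ) {q : ℝ}
    (hq : ∀ j, μ.real {ω | V ω j ≠ 0} ≤ q) (k : ℕ) :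
    mgf (fun ω => heavyPart k (V ω)) μ 1 ≤
      rexp (rexp ((rexp 2 - 1) * q * Fintype.card κ - (k + 1))) := by
  have := hind.isProbabilityMeasure
  have hmeas : Measurable fun ω => V ω := measurable_pi_lambda _ hV
  have hint : Integrable (fun ω => rexp (2 * nnz (V ω))) μ :=
    integrable_exp_mul_of_le 2 (Fintype.card κ) zero_le_two
      (measurable_nnz.comp hmeas).aemeasurable
      (ae_of_all _ fun ω => by exact_mod_cast nnz_le_card _)
  calc mgf (fun ω => heavyPart k (V ω)) μ 1
      ≤ ∫ ω, 1 + rexp (-(k + 1)) * rexp (2 * nnz (V ω)) ∂μ :=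
        integral_mono (integrable_exp_mul_of_le 1 (Fintype.card κ) zero_le_one
          ((measurable_heavyPart k).comp hmeas).aemeasurable
          (ae_of_all _ fun ω => heavyPart_le_card k _))
          ((integrable_const 1).add (hint.const_mul _))
          fun ω => by simpa using exp_heavyPart_le k (V ω)
    _ = 1 + rexp (-(k + 1)) * mgf (fun ω => (nnz (V ω) : ℝ)) μ 2 := by
        rw [integral_add (integrable_const 1) (hint.const_mul _), integral_const_mul]
        simp [mgf]
    _ ≤ 1 + rexp (-(k + 1)) * rexp ((rexp 2 - 1) * q * Fintype.card κ) := by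
        gcongr
        exact mgf_nnz_le hV hind hq zero_le_two
    _ ≤ rexp (rexp ((rexp 2 - 1) * q * Fintype.card κ - (k + 1))) := by
        rw [← Real.exp_add, neg_add_eq_sub]
        exact (add_comm _ _).le.trans (Real.add_one_le_exp _)

lemma measureReal_le_heavyMass_le {m κ : Type*} [Fintype m] [Fintype κ]
    {A : Ω → Matrix m κ ℝ} (hA : ∀ i j, Measurable fun ω => A ω i j)
    (hind : iIndepFun (fun p : m × κ => fun ω => A ω p.1 p.2) μ) {q : ℝ}
    (hq : ∀ i j, μ.real {ω | A ω i j ≠ 0} ≤ q) (k : ℕ) (t : ℝ) :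
    μ.real {ω | t ≤ heavyMass k (A ω)} ≤
      rexp (Fintype.card m * rexp ((rexp 2 - 1) * q * Fintype.card κ - (k + 1)) - t) := by
  have := hind.isProbabilityMeasure
  set X : m → Ω → ℝ := fun i ω => heavyPart k (A ω i)
  have hXmeas : ∀ i, Measurable (X i) := fun i =>
    (measurable_heavyPart k).comp (measurable_pi_lambda _ (hA i))
  have hXind : iIndepFun X μ := (hind.curry hA).comp _ fun _ => measurable_heavyPart k
  have hsum : (fun ω => (heavyMass k (A ω) : ℝ)) = ∑ i, X i := by
    ext ω
    simp [X, heavyMass_eq_sum]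
  have hmgf : mgf (fun ω => (heavyMass k (A ω) : ℝ)) μ 1 ≤
      rexp (Fintype.card m * rexp ((rexp 2 - 1) * q * Fintype.card κ - (k + 1))) := by
    rw [hsum, hXind.mgf_sum hXmeas, Real.exp_nat_mul]
    refine (prod_le_prod (fun i _ => mgf_nonneg) fun i _ => mgf_heavyPart_le (hA i)
      (hind.precomp (Prod.mk_right_injective i)) (hq i) k).trans_eq ?_
    rw [prod_const, card_univ]
  have hint : Integrable (fun ω => rexp (1 * heavyMass k (A ω))) μ :=
    integrable_exp_mul_of_le 1 (Fintype.card m * Fintype.card κ) zero_le_one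
      (by rw [hsum, sum_fn]; exact (Finset.measurable_sum _ fun i _ => hXmeas i).aemeasurable)
      (ae_of_all _ fun ω => by exact_mod_cast heavyMass_le_card_mul k (A ω))
  calc μ.real {ω | t ≤ heavyMass k (A ω)}
      ≤ rexp (-1 * t) * mgf (fun ω => (heavyMass k (A ω) : ℝ)) μ 1 :=
        measure_ge_le_exp_mul_mgf t zero_le_one hint
    _ ≤ _ := by
        rw [neg_one_mul, sub_eq_neg_add, Real.exp_add]
        gcongr

lemma measureReal_le_heavyMass_le_exp {n : ℕ} (hn : 0 < n) {A : Ω → Matrix (Fin n) (Fin n) ℝ}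
    (hA : ∀ i j, Measurable fun ω => A ω i j)
    (hind : iIndepFun (fun p : Fin n × Fin n => fun ω => A ω p.1 p.2) μ)
    (hq : ∀ i j, μ.real {ω | A ω i j ≠ 0} ≤ 4 / n) {ε : ℝ} {k : ℕ}
    (hk : rexp (4 * (rexp 2 - 1) - (k + 1)) ≤ ε / 4) :
    μ.real {ω | ε * n / 2 ≤ heavyMass k (A ω)} ≤ rexp (-(ε * n) / 4) := by
  refine (measureReal_le_heavyMass_le hA hind hq k _).trans (Real.exp_le_exp.2 ?_)
  have hn' : (n : ℝ) ≠ 0 := by positivity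
  rw [Fintype.card_fin, show (rexp 2 - 1) * (4 / n) * n = 4 * (rexp 2 - 1) by field_simp]
  linarith [mul_le_mul_of_nonneg_left hk (Nat.cast_nonneg n)]

end HeavyMassTail

/-- **Moderately large entries.** There is an absolute constant `C` such that: if `ε ∈ (0,1/2]`
and `A` is an `n × n` random matrix with i.i.d. entries with `E A_{ij}² ≤ 1` such that almost
surely each entry is either `0` or has absolute value in `[√n/2, 5√n/√ε]`, then with
probability at least `1 - 2 exp(-εn/4)` one can zero out an `εn × εn` submatrix of `A` so
that the resulting matrix `Ã` satisfies `‖Ã‖ ≤ C (ln ε⁻¹/√ε) √n`. -/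
theorem moderate_entries :
    ∃ C : ℝ, 0 < C ∧
    ∀ (n : ℕ) (Ω : Type) (_ : MeasureSpace Ω) (_ : IsProbabilityMeasure (ℙ : Measure Ω))
      (ε : ℝ), 0 < ε → ε ≤ 1 / 2 →
      ∀ A : Ω → Matrix (Fin n) (Fin n) ℝ,
      (∀ i j, Measurable fun ω => A ω i j) →
      iIndepFun (fun p : Fin n × Fin n => fun ω => A ω p.1 p.2) ℙ →
      (∀ i j k l, IdentDistrib (fun ω => A ω i j) (fun ω => A ω k l) ℙ ℙ) →
      (∀ i j, MemLp (fun ω => A ω i j) 2 ℙ) →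
      (∀ i j, ∫ ω, (A ω i j) ^ 2 ∂ℙ ≤ 1) →
      (∀ i j, ∀ᵐ ω ∂ℙ, A ω i j = 0 ∨
        (Real.sqrt n / 2 ≤ |A ω i j| ∧ |A ω i j| ≤ 5 * Real.sqrt n / Real.sqrt ε)) →
      ENNReal.ofReal (1 - 2 * Real.exp (-(ε * n) / 4)) ≤
        ℙ {ω | ∃ I J : Finset (Fin n), (I.card : ℝ) ≤ ε * n ∧ (J.card : ℝ) ≤ ε * n ∧
          l2OpNorm (zeroSub (A ω) I J) ≤
            C * (Real.log ε⁻¹ / Real.sqrt ε) * Real.sqrt n} := by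
  refine ⟨300, by norm_num, fun n Ω _ _ ε hε hε2 A hA hind _ hL2 hsq hae => ?_⟩
  rcases n.eq_zero_or_pos with rfl | hn
  · simp [ENNReal.ofReal_of_nonpos (show (1 : ℝ) - 2 ≤ 0 by norm_num)]
  obtain ⟨k, hk_tail, hk_const⟩ := exists_threshold hε hε2
  have hq : ∀ i j, (ℙ : Measure Ω).real {ω | A ω i j ≠ 0} ≤ 4 / n := fun i j => by
    refine (measureReal_ne_zero_le (by positivity) (hL2 i j)
      ((hae i j).mono fun ω h => h.imp_right And.left)).trans ?_
    rw [div_pow, sq_sqrt n.cast_nonneg, div_div_eq_mul_div,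
      div_le_div_iff_of_pos_right (by positivity)]
    linarith [hsq i j]
  have hrow := measureReal_le_heavyMass_le_exp hn hA hind hq hk_tail
  have hcol := measureReal_le_heavyMass_le_exp hn (A := fun ω => (A ω)ᵀ) (fun i j => hA j i)
    (hind.precomp Prod.swap_injective) (fun i j => hq j i) hk_tail
  rw [two_mul]
  refine ofReal_one_sub_add_le_measure hrow hcol ?_
  filter_upwards [ae_all_iff.2 fun i => ae_all_iff.2 (hae i)] with ω hω hr hc
  have hM : 0 ≤ 5 * √n / √ε := by positivity
  obtain ⟨I, J, hI, hJ, hnorm⟩ := exists_zeroSub_l2OpNorm_le k (A ω) hM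
    fun i j => (hω i j).elim (fun h => by simpa [h] using hM) And.right
  have hcard : ∀ s : Finset (Fin n), #s ≤ heavyMass k (A ω) + heavyMass k (A ω)ᵀ →
      (#s : ℝ) ≤ ε * n := fun s hs => by
    have : (#s : ℝ) ≤ heavyMass k (A ω) + heavyMass k (A ω)ᵀ := by exact_mod_cast hs
    linarith [not_le.1 hr, not_le.1 hc]
  refine ⟨I, J, hcard I hI, hcard J hJ, hnorm.trans ?_⟩
  calc (k : ℝ) * (5 * √n / √ε) = 5 * k * (√n / √ε) := by ring
    _ ≤ 300 * log ε⁻¹ * (√n / √ε) := by gcongr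
    _ = 300 * (log ε⁻¹ / √ε) * √n := by ring
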